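/- Let n > 1 and let G ⊆ K_{n,n} be a graph that is covered by Hall violators but is not totally ordered. Then the coefficient a*_G of G in the unique real multilinear polynomial representing the dual function BPM*_n is zero. Consequently, every G with a*_G ≠ 0 is totally ordered. -/

import Mathlib

open Finset
open scoped Classical

/-- Edges of the complete bipartite graph `K_{n,n}` on labeled parts of size `n`. -/
abbrev Edge (n : ℕ) := Fin n × Fin n

/-- `M` is (the edge set of) a perfect matching of `K_{n,n}`. -/
def isPM {n : ℕ} (M : Finset (Edge n)) : Prop :=
  ∃ σ : Equiv.Perm (Fin n), M = Finset.univ.image fun i => (i, σ i)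

/-- `G` is matching-covered: its edge set is a (nonempty) union of perfect matchings. -/
def matchingCovered {n : ℕ} (G : Finset (Edge n)) : Prop :=
  ∃ S : Finset (Finset (Edge n)), S.Nonempty ∧ (∀ M ∈ S, isPM M) ∧ S.sup id = G

/-- `G` contains a perfect matching. -/
def hasPM {n : ℕ} (G : Finset (Edge n)) : Prop :=
  ∃ σ : Equiv.Perm (Fin n), ∀ i, (i, σ i) ∈ G

/-- The bipartite graph on the vertex set `Fin n ⊕ Fin n` with edge set `G`. -/
def graphOn {n : ℕ} (G : Finset (Edge n)) : SimpleGraph (Fin n ⊕ Fin n) :=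
  SimpleGraph.fromRel fun u v => ∃ e ∈ G, u = Sum.inl e.1 ∧ v = Sum.inr e.2

/-- The number of connected components of `G` (as a spanning subgraph of `K_{n,n}`). -/
noncomputable def numComponents {n : ℕ} (G : Finset (Edge n)) : ℕ :=
  Nat.card (graphOn G).ConnectedComponent

/-- The cyclomatic number `χ(G) = |E(G)| − |V(G)| + |C(G)|`. -/
noncomputable def cyclo {n : ℕ} (G : Finset (Edge n)) : ℤ :=
  (G.card : ℤ) + numComponents G - 2 * n

/-- `G` is elementary: a connected matching-covered graph. -/
def elementary {n : ℕ} (G : Finset (Edge n)) : Prop :=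
  matchingCovered G ∧ (graphOn G).Connected

/-- The bipartite perfect matching decision function, on inputs `x : Edge n → Bool`. -/
def BPMb (n : ℕ) (x : Edge n → Bool) : Prop :=
  ∃ σ : Equiv.Perm (Fin n), ∀ i, x (i, σ i) = true

/-- `H` is a Hall violator: a complete bipartite graph `K_{X,Y}` with `|X| + |Y| = n + 1`
(the remaining vertices isolated). -/
def HallViolator {n : ℕ} (H : Finset (Edge n)) : Prop :=
  ∃ X Y : Finset (Fin n), X.card + Y.card = n + 1 ∧ H = X ×ˢ Y

/-- `G` is covered by Hall violators: its edge set is a nonempty union of Hall violators. -/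
def HVCovered {n : ℕ} (G : Finset (Edge n)) : Prop :=
  ∃ S : Finset (Finset (Edge n)), S.Nonempty ∧ (∀ H ∈ S, HallViolator H) ∧ S.sup id = G

/-- The neighbourhood of a left vertex `a` in the bipartite graph `G`. -/
def nbhd {n : ℕ} (G : Finset (Edge n)) (a : Fin n) : Finset (Fin n) :=
  (G.filter fun e => e.1 = a).image Prod.snd

/-- `G` is totally ordered: its left vertices can be ordered so that their neighbourhoods
are nested, `N(a_1) ⊇ N(a_2) ⊇ … ⊇ N(a_n)`. -/
def totallyOrdered {n : ℕ} (G : Finset (Edge n)) : Prop :=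
  ∃ σ : Equiv.Perm (Fin n), ∀ i j : Fin n, i ≤ j → nbhd G (σ j) ⊆ nbhd G (σ i)

/-- `G` is strictly totally ordered:
`N(a_1) ⊋ N(a_2) ⊋ … ⊋ N(a_n) ⊋ ∅` for some ordering of the left vertices. -/
def strictlyTotallyOrdered {n : ℕ} (G : Finset (Edge n)) : Prop :=
  ∃ σ : Equiv.Perm (Fin n),
    (∀ i j : Fin n, i < j → nbhd G (σ j) ⊂ nbhd G (σ i)) ∧
    ∀ i : Fin n, (nbhd G (σ i)).Nonempty

/-!
Substituting the indicator of `T` into the multilinear identity gives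
`∑_{S ⊆ T} a*_S = 1` exactly when the complement of `T` has no perfect matching, i.e. (Hall)
when `T` contains a Hall violator. Möbius inversion then yields `a*_G = [G = ∅] − c(G)`, where
`c(G)` is the signed count `∑ (-1)^|F|` over families `F` of Hall violators with union `G`.

If `G` is not totally ordered there are left vertices `u, v` and right vertices
`p ∈ N(u) \ N(v)`, `q ∈ N(v) \ N(u)`. Uncrossing two Hall violators of `G` through `(u,p)` and
`(v,q)` gives a Hall violator `H₀ ⊆ G` containing neither edge. By Weisner's theorem (toggling
`H₀` in a family), `c(G)` is minus the sum of `c(x)` over the proper `x ⊂ G` with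
`x ∪ H₀ = G`; each such `x` still exhibits the crossing `u, v, p, q`, so vanishes by induction.
-/

section CoverSum

variable {α : Type*} [DecidableEq α] (𝓗 : Finset (Finset α))

def coverSum (E : Finset α) : ℤ :=
  ∑ F ∈ 𝓗.powerset with F.sup id = E, (-1) ^ #F

theorem sum_coverSum (s : Finset (Finset α)) :
    ∑ x ∈ s, coverSum 𝓗 x = ∑ F ∈ 𝓗.powerset with F.sup id ∈ s, (-1) ^ #F := by
  simp only [coverSum, sum_filter]
  rw [sum_comm]
  exact sum_congr rfl fun F _ => sum_ite_eq s (F.sup id) _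

theorem sum_powerset_coverSum (w : Finset α) :
    ∑ x ∈ w.powerset, coverSum 𝓗 x = if ∃ H ∈ 𝓗, H ⊆ w then 0 else 1 := by
  have hfamilies : {F ∈ 𝓗.powerset | F.sup id ∈ w.powerset} = {H ∈ 𝓗 | H ⊆ w}.powerset := by
    ext F
    simp [Finset.subset_iff, forall_and]
  rw [sum_coverSum, hfamilies, sum_powerset_neg_one_pow_card]
  simp only [filter_eq_empty_iff, ← not_exists, exists_prop]
  exact ite_not _ _ _

theorem sum_coverSum_eq_zero {s : Finset (Finset α)} {H₀ : Finset α} (hH₀ : H₀ ∈ 𝓗)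
    (hs : ∀ x, x ∪ H₀ ∈ s ↔ x ∈ s) : ∑ x ∈ s, coverSum 𝓗 x = 0 := by
  rw [sum_coverSum, sum_filter, ← insert_erase hH₀, sum_powerset_insert (notMem_erase H₀ 𝓗),
    ← sum_add_distrib]
  refine sum_eq_zero fun F hF => ?_
  have hF₀ : H₀ ∉ F := fun h => notMem_erase H₀ 𝓗 (mem_powerset.1 hF h)
  simp only [sup_insert, card_insert_of_notMem hF₀, id, sup_eq_union, union_comm H₀, hs, pow_succ]
  split_ifs <;> ring

theorem coverSum_eq_zero_of_uncovered {G : Finset α} {e : α} (he : e ∈ G)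
    (h : ∀ H ∈ 𝓗, H ⊆ G → e ∉ H) : coverSum 𝓗 G = 0 := by
  refine sum_eq_zero fun F hF => absurd he ?_
  obtain ⟨hF𝓗, rfl⟩ := mem_filter.1 hF
  simp only [mem_sup, id, not_exists, not_and]
  exact fun H hH => h H (mem_powerset.1 hF𝓗 hH) (le_sup (f := id) hH)

theorem coverSum_eq_zero_of_forall {P : Finset α → Prop}
    (hP : ∀ G, P G → (∀ e ∈ G, ∃ H ∈ 𝓗, H ⊆ G ∧ e ∈ H) →
      ∃ H₀ ∈ 𝓗, H₀ ⊆ G ∧ ∀ x, x ∪ H₀ = G → P x) :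
    ∀ G, P G → coverSum 𝓗 G = 0 := by
  intro G
  induction G using Finset.strongInduction with
  | H G ih =>
  intro hG
  by_cases hcov : ∀ e ∈ G, ∃ H ∈ 𝓗, H ⊆ G ∧ e ∈ H
  swap
  · push Not at hcov
    obtain ⟨e, he, h⟩ := hcov
    exact coverSum_eq_zero_of_uncovered 𝓗 he h
  obtain ⟨H₀, hH₀, hH₀G, hx⟩ := hP G hG hcov
  have hsum := sum_coverSum_eq_zero 𝓗 (s := {x ∈ G.powerset | x ∪ H₀ = G}) hH₀ fun x => by
    simp only [mem_filter, mem_powerset, union_assoc, union_self]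
    exact ⟨fun h => ⟨h.2 ▸ subset_union_left, h.2⟩, fun h => ⟨h.2 ▸ subset_rfl, h.2⟩⟩
  have hGs : G ∈ {x ∈ G.powerset | x ∪ H₀ = G} :=
    mem_filter.2 ⟨mem_powerset_self G, union_eq_left.2 hH₀G⟩
  rwa [← add_sum_erase _ _ hGs, sum_eq_zero, add_zero] at hsum
  intro x hxs
  obtain ⟨hxG, hxH₀⟩ := mem_filter.1 (mem_of_mem_erase hxs)
  exact ih x ((mem_powerset.1 hxG).ssubset_of_ne (ne_of_mem_erase hxs)) (hx x hxH₀)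

end CoverSum

theorem eq_of_sum_powerset_eq {α M : Type*} [AddCancelCommMonoid M] {f g : Finset α → M}
    (h : ∀ T : Finset α, ∑ S ∈ T.powerset, f S = ∑ S ∈ T.powerset, g S) (T : Finset α) :
    f T = g T := by
  induction T using Finset.strongInduction with
  | H T ih =>
  have hT := h T
  rw [← add_sum_erase _ _ (mem_powerset_self T), ← add_sum_erase _ g (mem_powerset_self T),
    sum_congr rfl fun S hS => ih S ((mem_powerset.1 (mem_of_mem_erase hS)).ssubset_of_ne
      (ne_of_mem_erase hS))] at hT
  exact add_right_cancel hT

theorem eq_sub_coverSum_of_sum_powerset {α R : Type*} [DecidableEq α] [AddCommGroupWithOne R]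
    (𝓗 : Finset (Finset α)) {a : Finset α → R}
    (ha : ∀ T, ∑ S ∈ T.powerset, a S = if ∃ H ∈ 𝓗, H ⊆ T then 1 else 0) (G : Finset α) :
    a G = (if G = ∅ then 1 else 0) - coverSum 𝓗 G := by
  refine eq_of_sum_powerset_eq (g := fun S => (if S = ∅ then 1 else 0) - (coverSum 𝓗 S : R))
    (fun T => ?_) G
  rw [ha, sum_sub_distrib, sum_ite_eq', if_pos (empty_mem_powerset T), ← Int.cast_sum,
    sum_powerset_coverSum]
  split_ifs <;> simp

theorem sum_mul_prod_ite_mem {α R : Type*} [Fintype α] [DecidableEq α] [CommSemiring R]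
    (a : Finset α → R) (T : Finset α) :
    ∑ S, a S * ∏ e ∈ S, (if e ∈ T then 1 else 0) = ∑ S ∈ T.powerset, a S := by
  simp only [prod_boole, mul_ite, mul_one, mul_zero, ← sum_filter]
  congr 1
  ext S
  simp [Finset.subset_iff]

section Bipartite

variable {n : ℕ}

noncomputable def hallViolators (n : ℕ) : Finset (Finset (Edge n)) := {H | HallViolator H}

theorem mem_hallViolators {H : Finset (Edge n)} : H ∈ hallViolators n ↔ HallViolator H := by
  simp [hallViolators]

theorem exists_hallViolator_product_of_card {X Y : Finset (Fin n)} (h : n + 1 ≤ #X + #Y) :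
    ∃ Y' ⊆ Y, HallViolator (X ×ˢ Y') := by
  have hX : #X ≤ n := by simpa using X.card_le_univ
  obtain ⟨Y', hY'Y, hY'⟩ := exists_subset_card_eq (s := Y) (n := n + 1 - #X) (by omega)
  exact ⟨Y', hY'Y, X, Y', by omega, rfl⟩

theorem HallViolator.exists_mem {H : Finset (Edge n)} (hH : HallViolator H)
    (σ : Equiv.Perm (Fin n)) : ∃ i, (i, σ i) ∈ H := by
  obtain ⟨X, Y, hXY, rfl⟩ := hH
  obtain ⟨y, hy⟩ := inter_nonempty_of_card_lt_card_add_card (subset_univ (X.image σ))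
    (subset_univ Y) (by simp [card_image_of_injective X σ.injective, hXY])
  obtain ⟨i, hi, rfl⟩ := mem_image.1 (mem_inter.1 hy).1
  exact ⟨i, mk_mem_product hi (mem_inter.1 hy).2⟩

/-- Hall's theorem, for the complement of `T`. -/
theorem exists_hallViolator_subset_of_forall_perm {T : Finset (Edge n)}
    (hT : ∀ σ : Equiv.Perm (Fin n), ∃ i, (i, σ i) ∈ T) : ∃ H ⊆ T, HallViolator H := by
  let t : Fin n → Finset (Fin n) := fun i => {y | (i, y) ∉ T}
  obtain ⟨X, hX⟩ : ∃ X : Finset (Fin n), #(X.biUnion t) < #X := by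
    by_contra! hall
    obtain ⟨f, hf, hft⟩ := (all_card_le_biUnion_card_iff_exists_injective t).1 hall
    obtain ⟨i, hi⟩ := hT (Equiv.ofBijective f (Finite.injective_iff_bijective.1 hf))
    exact (mem_filter.1 (hft i)).2 hi
  have hXY : X ×ˢ (X.biUnion t)ᶜ ⊆ T := by
    intro e he
    obtain ⟨he₁, he₂⟩ := mem_product.1 he
    by_contra heT
    exact mem_compl.1 he₂ (mem_biUnion.2 ⟨e.1, he₁, by simpa [t] using heT⟩)
  have hU : #(X.biUnion t) ≤ n := by simpa using (X.biUnion t).card_le_univ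
  obtain ⟨Y, hY, hHV⟩ := exists_hallViolator_product_of_card (X := X) (Y := (X.biUnion t)ᶜ)
    (by rw [card_compl, Fintype.card_fin]; omega)
  exact ⟨_, (product_subset_product_right hY).trans hXY, hHV⟩

theorem bpmb_not_mem_iff (T : Finset (Edge n)) :
    BPMb n (fun e => !decide (e ∈ T)) ↔ ¬ ∃ H ∈ hallViolators n, H ⊆ T := by
  simp only [BPMb, Bool.not_eq_true', decide_eq_false_iff_not, mem_hallViolators, not_exists,
    not_and]
  constructor
  · rintro ⟨σ, hσ⟩ H hH hHT
    obtain ⟨i, hi⟩ := hH.exists_mem σ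
    exact hσ i (hHT hi)
  · intro h
    by_contra! hT
    obtain ⟨H, hHT, hH⟩ := exists_hallViolator_subset_of_forall_perm hT
    exact h H hH hHT

theorem sum_powerset_eq_of_forall_eval {a : Finset (Edge n) → ℝ}
    (ha : ∀ x : Edge n → Bool,
      (∑ S : Finset (Edge n), a S * ∏ e ∈ S, (if x e then (1 : ℝ) else 0))
        = (if BPMb n (fun e => ! x e) then 0 else 1)) (T : Finset (Edge n)) :
    ∑ S ∈ T.powerset, a S = if ∃ H ∈ hallViolators n, H ⊆ T then 1 else 0 := by
  have hT := ha fun e => decide (e ∈ T)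
  simp only [decide_eq_true_eq, sum_mul_prod_ite_mem, bpmb_not_mem_iff] at hT
  rw [hT, ite_not]

theorem exists_hallViolator_subset_inter_or_inter {G : Finset (Edge n)}
    {X₁ Y₁ X₂ Y₂ : Finset (Fin n)} (h₁ : X₁ ×ˢ Y₁ ⊆ G) (h₂ : X₂ ×ˢ Y₂ ⊆ G)
    (c₁ : #X₁ + #Y₁ = n + 1) (c₂ : #X₂ + #Y₂ = n + 1) :
    ∃ H ⊆ G, HallViolator H ∧ ∀ e ∈ H, e.1 ∈ X₁ ∩ X₂ ∨ e.2 ∈ Y₁ ∩ Y₂ := by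
  have hX := card_inter_add_card_union X₁ X₂
  have hY := card_inter_add_card_union Y₁ Y₂
  by_cases hc : n + 1 ≤ #(X₁ ∩ X₂) + #(Y₁ ∪ Y₂)
  · obtain ⟨Y, hY, hHV⟩ := exists_hallViolator_product_of_card hc
    refine ⟨_, fun e he => ?_, hHV, fun e he => Or.inl (mem_product.1 he).1⟩
    obtain ⟨he₁, he₂⟩ := mem_product.1 he
    rcases mem_union.1 (hY he₂) with h | h
    · exact h₁ (mem_product.2 ⟨(mem_inter.1 he₁).1, h⟩)
    · exact h₂ (mem_product.2 ⟨(mem_inter.1 he₁).2, h⟩)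
  · obtain ⟨Y, hY, hHV⟩ := exists_hallViolator_product_of_card (X := X₁ ∪ X₂) (Y := Y₁ ∩ Y₂)
      (by omega)
    refine ⟨_, fun e he => ?_, hHV, fun e he => Or.inr (hY (mem_product.1 he).2)⟩
    obtain ⟨he₁, he₂⟩ := mem_product.1 he
    rcases mem_union.1 he₁ with h | h
    · exact h₁ (mem_product.2 ⟨h, (mem_inter.1 (hY he₂)).1⟩)
    · exact h₂ (mem_product.2 ⟨h, (mem_inter.1 (hY he₂)).2⟩)

def IsCrossing (G : Finset (Edge n)) (u v p q : Fin n) : Prop :=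
  (u, p) ∈ G ∧ (v, q) ∈ G ∧ (v, p) ∉ G ∧ (u, q) ∉ G

theorem coverSum_hallViolators_eq_zero_of_isCrossing {u v p q : Fin n} :
    ∀ G, IsCrossing G u v p q → coverSum (hallViolators n) G = 0 := by
  refine coverSum_eq_zero_of_forall _ fun G ⟨hup, hvq, hvp, huq⟩ hcov => ?_
  obtain ⟨H₁, hH₁, hH₁G, hup₁⟩ := hcov _ hup
  obtain ⟨H₂, hH₂, hH₂G, hvq₂⟩ := hcov _ hvq
  obtain ⟨X₁, Y₁, c₁, rfl⟩ := mem_hallViolators.1 hH₁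
  obtain ⟨X₂, Y₂, c₂, rfl⟩ := mem_hallViolators.1 hH₂
  obtain ⟨hu₁, hp₁⟩ := mem_product.1 hup₁
  obtain ⟨hv₂, hq₂⟩ := mem_product.1 hvq₂
  obtain ⟨H₀, hH₀G, hH₀, hH₀rows⟩ := exists_hallViolator_subset_inter_or_inter hH₁G hH₂G c₁ c₂
  have hup₀ : (u, p) ∉ H₀ := fun h => (hH₀rows _ h).elim
    (fun hu => huq (hH₂G (mk_mem_product (mem_inter.1 hu).2 hq₂)))
    (fun hp => hvp (hH₂G (mk_mem_product hv₂ (mem_inter.1 hp).2)))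
  have hvq₀ : (v, q) ∉ H₀ := fun h => (hH₀rows _ h).elim
    (fun hv => hvp (hH₁G (mk_mem_product (mem_inter.1 hv).1 hp₁)))
    (fun hq => huq (hH₁G (mk_mem_product hu₁ (mem_inter.1 hq).1)))
  refine ⟨H₀, mem_hallViolators.2 hH₀, hH₀G, fun x hx => ?_⟩
  subst hx
  refine ⟨?_, ?_, fun h => hvp (mem_union_left _ h), fun h => huq (mem_union_left _ h)⟩
  · exact (mem_union.1 hup).resolve_right hup₀
  · exact (mem_union.1 hvq).resolve_right hvq₀

theorem mem_nbhd {G : Finset (Edge n)} {u y : Fin n} : y ∈ nbhd G u ↔ (u, y) ∈ G := by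
  simp [nbhd]

theorem exists_perm_antitone_of_total {β : Type*} {f : Fin n → Finset β}
    (h : ∀ i j, f i ⊆ f j ∨ f j ⊆ f i) : ∃ σ : Equiv.Perm (Fin n), Antitone (f ∘ σ) := by
  let σ := Tuple.sort fun i => OrderDual.toDual #(f i)
  refine ⟨σ, fun i j hij => ?_⟩
  have hcard : #(f (σ j)) ≤ #(f (σ i)) :=
    Tuple.monotone_sort (fun i => OrderDual.toDual #(f i)) hij
  rcases h (σ j) (σ i) with hji | hij
  · exact hji
  · exact (eq_of_subset_of_card_le hij hcard).ge

theorem exists_isCrossing_of_not_totallyOrdered {G : Finset (Edge n)} (hG : ¬ totallyOrdered G) :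
    ∃ u v p q, IsCrossing G u v p q := by
  by_contra! hnone
  obtain ⟨σ, hσ⟩ := exists_perm_antitone_of_total (f := nbhd G) fun u v => by
    by_contra! huv
    obtain ⟨p, hpu, hpv⟩ := not_subset.1 huv.1
    obtain ⟨q, hqv, hqu⟩ := not_subset.1 huv.2
    exact hnone u v p q ⟨mem_nbhd.1 hpu, mem_nbhd.1 hqv, mt mem_nbhd.2 hpv, mt mem_nbhd.2 hqu⟩
  exact hG ⟨σ, hσ⟩

end Bipartite

theorem stmt17_general (n : ℕ) (a : Finset (Edge n) → ℝ)
    (ha : ∀ x : Edge n → Bool,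
      (∑ S : Finset (Edge n), a S * ∏ e ∈ S, (if x e then (1 : ℝ) else 0))
        = (if BPMb n (fun e => ! x e) then 0 else 1)) :
    (∀ G : Finset (Edge n), HVCovered G → ¬ totallyOrdered G → a G = 0) ∧
    (∀ G : Finset (Edge n), a G ≠ 0 → totallyOrdered G) := by
  have hcoeff := eq_sub_coverSum_of_sum_powerset _ (sum_powerset_eq_of_forall_eval ha)
  have hvanish : ∀ G, ¬ totallyOrdered G → a G = 0 := by
    intro G hG
    obtain ⟨u, v, p, q, hcross⟩ := exists_isCrossing_of_not_totallyOrdered hG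
    rw [hcoeff, if_neg (ne_empty_of_mem hcross.1),
      coverSum_hallViolators_eq_zero_of_isCrossing G hcross]
    simp
  exact ⟨fun G _ => hvanish G, fun G hG => by_contra fun h => hG (hvanish G h)⟩

/-- for `n > 1`, in the unique real multilinear polynomial representing the
dual function `BPM*_n(x) = 1 − BPM_n(1−x)`, every graph `G` that is covered by Hall
violators but not totally ordered has coefficient `a*_G = 0`; consequently every `G` with
`a*_G ≠ 0` is totally ordered. -/
theorem stmt17 (n : ℕ) (hn : 1 < n) (a : Finset (Edge n) → ℝ)
    (ha : ∀ x : Edge n → Bool,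
      (∑ S : Finset (Edge n), a S * ∏ e ∈ S, (if x e then (1 : ℝ) else 0))
        = (if BPMb n (fun e => ! x e) then 0 else 1)) :
    (∀ G : Finset (Edge n), HVCovered G → ¬ totallyOrdered G → a G = 0) ∧
    (∀ G : Finset (Edge n), a G ≠ 0 → totallyOrdered G) :=
  stmt17_general n a ha
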